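/- arXiv:1607.05516 — 6 statements merged into one kernel-verified Lean document; each statement's English description precedes it below -/
import Mathlib

section
/- Let E be a type, let V be a vector space over the two-element field GF(2) (ZMod 2), and let v : E → V. Call a finite set S ⊆ E dependent if the restriction of v to S is not linearly independent, and call a finite set a circuit if it is dependent but every proper subset of it is independent. Then for any two circuits C1 and C2, the symmetric difference C1 △ C2 can be partitioned into pairwise disjoint circuits (in particular, if C1 = C2 the symmetric difference is empty and the partition is empty). -/
/-- A finite set `C` is a circuit of the binary matroid represented by `v : E → V`
(over `GF(2)`) if `v` is not linearly independent on `C` but is linearly independent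
on every proper subset of `C`. -/
def BinaryCircuit {E V : Type*} [AddCommGroup V] [Module (ZMod 2) V]
    (v : E → V) (C : Finset E) : Prop :=
  ¬ LinearIndependent (ZMod 2) (fun x : {y // y ∈ C} => v x.1) ∧
    ∀ D ⊂ C, LinearIndependent (ZMod 2) (fun x : {y // y ∈ D} => v x.1)

/-! Over `GF(2)` a linear dependence is just a nonempty set of vectors summing to zero, so the
circuits are exactly the minimal nonempty zero-sum sets. The sum over `C1 △ C2` is the sum over
`C1` plus the sum over `C2`, hence zero, and a zero-sum set splits into disjoint circuits by
repeatedly removing a minimal nonempty zero-sum subset. -/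

lemma ZMod.two_eq_zero_or_one (a : ZMod 2) : a = 0 ∨ a = 1 := by
  revert a; decide

section

variable {ι E V : Type*} [AddCommGroup V] [Module (ZMod 2) V]

lemma add_self_eq_zero_of_zmod_two (x : V) : x + x = 0 := by
  rw [← two_smul (ZMod 2) x, show (2 : ZMod 2) = 0 from rfl, zero_smul]

lemma not_linearIndependent_zmod_two_iff (w : ι → V) :
    ¬ LinearIndependent (ZMod 2) w ↔ ∃ s : Finset ι, s.Nonempty ∧ ∑ i ∈ s, w i = 0 := by
  classical
  rw [linearIndependent_iff']
  push Not
  constructor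
  · rintro ⟨s, g, hg, i, hi, hgi⟩
    refine ⟨s.filter (g · = 1), ⟨i, Finset.mem_filter.2 ⟨hi, ?_⟩⟩, ?_⟩
    · exact (ZMod.two_eq_zero_or_one _).resolve_left hgi
    rw [← hg, Finset.sum_filter]
    refine Finset.sum_congr rfl fun j _ => ?_
    rcases ZMod.two_eq_zero_or_one (g j) with h | h <;> simp [h]
  · rintro ⟨s, ⟨i, hi⟩, hs⟩
    exact ⟨s, 1, by simpa using hs, i, hi, one_ne_zero⟩

lemma not_linearIndependent_finset_iff (v : E → V) (S : Finset E) :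
    ¬ LinearIndependent (ZMod 2) (fun x : {y // y ∈ S} => v x.1) ↔
      ∃ T ⊆ S, T.Nonempty ∧ ∑ e ∈ T, v e = 0 := by
  classical
  rw [not_linearIndependent_zmod_two_iff]
  constructor
  · rintro ⟨s, hne, hs⟩
    refine ⟨s.map (Function.Embedding.subtype _), fun x hx => ?_, hne.map, by simpa using hs⟩
    obtain ⟨y, -, rfl⟩ := Finset.mem_map.1 hx
    exact y.2
  · rintro ⟨T, hTS, ⟨t, ht⟩, hT⟩
    refine ⟨T.subtype (· ∈ S), ⟨⟨t, hTS ht⟩, Finset.mem_subtype.2 ht⟩, ?_⟩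
    rwa [Finset.sum_subtype_of_mem v hTS]

variable [DecidableEq E]

lemma binaryCircuit_iff_minimal (v : E → V) (C : Finset E) :
    BinaryCircuit v C ↔ Minimal (fun T : Finset E => T.Nonempty ∧ ∑ e ∈ T, v e = 0) C := by
  have dependent (D : Finset E) := not_linearIndependent_finset_iff v D
  constructor
  · rintro ⟨hdep, hindep⟩
    obtain ⟨T, hTC, hT⟩ := (dependent C).1 hdep
    have hTC_eq : T = C := by
      by_contra hne
      exact (dependent T).2 ⟨T, subset_rfl, hT⟩ (hindep T (hTC.ssubset_of_ne hne))
    subst hTC_eq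
    refine ⟨hT, fun D hD hDT => ?_⟩
    by_contra hTD
    exact (dependent D).2 ⟨D, subset_rfl, hD⟩ (hindep D (lt_of_le_not_ge hDT hTD))
  · intro hmin
    refine ⟨(dependent C).2 ⟨C, subset_rfl, hmin.prop⟩, fun D hDC => ?_⟩
    by_contra hdep
    obtain ⟨T, hTD, hT⟩ := (dependent D).1 hdep
    exact hDC.not_ge ((hmin.le_of_le hT (hTD.trans hDC.subset)).trans hTD)

lemma BinaryCircuit.nonempty {v : E → V} {C : Finset E} (h : BinaryCircuit v C) :
    C.Nonempty :=
  ((binaryCircuit_iff_minimal v C).1 h).prop.1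

lemma BinaryCircuit.sum_eq_zero {v : E → V} {C : Finset E} (h : BinaryCircuit v C) :
    ∑ e ∈ C, v e = 0 :=
  ((binaryCircuit_iff_minimal v C).1 h).prop.2

lemma exists_binaryCircuit_subset {v : E → V} {S : Finset E} (hS : S.Nonempty)
    (hsum : ∑ e ∈ S, v e = 0) : ∃ C ⊆ S, BinaryCircuit v C := by
  obtain ⟨C, hCS, hC⟩ :=
    exists_minimal_le_of_wellFoundedLT (fun T : Finset E => T.Nonempty ∧ ∑ e ∈ T, v e = 0) S
      ⟨hS, hsum⟩
  exact ⟨C, hCS, (binaryCircuit_iff_minimal v C).2 hC⟩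

lemma exists_pairwiseDisjoint_binaryCircuits {v : E → V} (S : Finset E)
    (hsum : ∑ e ∈ S, v e = 0) :
    ∃ 𝒞 : Finset (Finset E), (∀ C ∈ 𝒞, BinaryCircuit v C) ∧
      (𝒞 : Set (Finset E)).PairwiseDisjoint id ∧ 𝒞.biUnion id = S := by
  induction S using Finset.strongInduction with
  | H S ih =>
  rcases S.eq_empty_or_nonempty with rfl | hS
  · exact ⟨∅, by simp, by simp, rfl⟩
  obtain ⟨C, hCS, hC⟩ := exists_binaryCircuit_subset hS hsum
  have hrest : ∑ e ∈ S \ C, v e = 0 := by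
    rw [Finset.sum_sdiff_eq_sub hCS, hsum, hC.sum_eq_zero, sub_zero]
  obtain ⟨𝒞, h𝒞, hdisj, hunion⟩ := ih _ (Finset.sdiff_ssubset hCS hC.nonempty) hrest
  refine ⟨insert C 𝒞, Finset.forall_mem_insert _ _ _ |>.2 ⟨hC, h𝒞⟩, ?_, ?_⟩
  · rw [Finset.coe_insert]
    refine hdisj.insert fun D hD _ => ?_
    have hDS : D ⊆ S \ C := hunion ▸ Finset.subset_biUnion_of_mem id hD
    exact Finset.disjoint_sdiff.mono_right hDS
  · rw [Finset.biUnion_insert, hunion, id, Finset.union_sdiff_of_subset hCS]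

lemma sum_symmDiff_of_zmod_two (f : E → V) (s t : Finset E) :
    ∑ e ∈ symmDiff s t, f e = ∑ e ∈ s, f e + ∑ e ∈ t, f e := by
  rw [symmDiff_def, Finset.sup_eq_union, Finset.sum_union disjoint_sdiff_sdiff,
    ← Finset.sum_inter_add_sum_sdiff s t, ← Finset.sum_inter_add_sum_sdiff t s,
    Finset.inter_comm t s, add_add_add_comm, add_self_eq_zero_of_zmod_two, zero_add]

end

/-- In a binary matroid, the symmetric difference of two circuits is the union of a
family of pairwise disjoint circuits (possibly empty). -/
theorem binary_symmDiff_circuits_is_cycle {E V : Type*} [DecidableEq E]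
    [AddCommGroup V] [Module (ZMod 2) V] (v : E → V) (C1 C2 : Finset E)
    (h1 : BinaryCircuit v C1) (h2 : BinaryCircuit v C2) :
    ∃ 𝒞 : Finset (Finset E), (∀ C ∈ 𝒞, BinaryCircuit v C) ∧
      (𝒞 : Set (Finset E)).PairwiseDisjoint id ∧
      𝒞.biUnion id = symmDiff C1 C2 :=
  exists_pairwiseDisjoint_binaryCircuits _ <| by
    rw [sum_symmDiff_of_zmod_two, h1.sum_eq_zero, h2.sum_eq_zero, add_zero]
end

section
/- Let M be a matroid with the property that for every two circuits C1, C2 of M the symmetric difference C1 △ C2 is a disjoint union of circuits of M (this property characterizes binary matroids). Let Z = {e1, e2, e3} be a circuit of M with e1, e2, e3 distinct, and let C be a circuit of M such that C ∩ Z = {e3}. If C △ Z is not a circuit of M, then C △ Z is a disjoint union of two circuits C1 and C2 of M containing e1 and e2 respectively, and moreover both C1 △ Z and C2 △ Z are circuits of M. -/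
/-- A circuit of a matroid is a minimal dependent set. -/
def Matroid.IsCircuit' {α : Type*} (M : Matroid α) (C : Set α) : Prop :=
  M.Dep C ∧ ∀ D ⊂ C, M.Indep D

/-- A cycle of a matroid is a (possibly empty) disjoint union of circuits. -/
def Matroid.IsCycle' {α : Type*} (M : Matroid α) (X : Set α) : Prop :=
  ∃ 𝒞 : Set (Set α), (∀ C ∈ 𝒞, M.IsCircuit' C) ∧
    𝒞.PairwiseDisjoint id ∧ X = ⋃₀ 𝒞

/-!
Every circuit `D` inside `C ∆ Z` meets `Z \ C`: otherwise `D ⊆ C \ Z`, a proper subset of `C`.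
So when `Z \ C = {e₁, e₂}`, the cycle `C ∆ Z` is either a single circuit or the disjoint union
of a circuit through `e₁` and one through `e₂`. Apply this dichotomy once more, to `C₁` and `Z`,
where `Z \ C₁ = {e₂, e₃}`. A splitting `C₁ ∆ Z = D₂ ⊔ D₃` with `e₃ ∈ D₃` is impossible: since
`C₁ ∆ Z ⊆ C ∪ {e₂}`, the circuit `D₃` lies in `C`, so it equals `C`, which forces `D₂ ⊆ {e₂}`.
But `{e₂}` is independent, being a proper subset of the triangle `Z`.
-/

open Set

theorem Set.sUnion_eq_union_of_forall_mem_or_mem {α : Type*} {𝒞 : Set (Set α)}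
    (h𝒞 : 𝒞.PairwiseDisjoint id) {A B : Set α} {a b : α} (hA : A ∈ 𝒞) (hB : B ∈ 𝒞)
    (ha : a ∈ A) (hb : b ∈ B) (hab : ∀ D ∈ 𝒞, a ∈ D ∨ b ∈ D) :
    ⋃₀ 𝒞 = A ∪ B := by
  refine subset_antisymm (sUnion_subset fun D hD => ?_)
    (union_subset (subset_sUnion_of_mem hA) (subset_sUnion_of_mem hB))
  rcases hab D hD with haD | hbD
  · rw [h𝒞.elim_set hD hA a haD ha]
    exact subset_union_left
  · rw [h𝒞.elim_set hD hB b hbD hb]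
    exact subset_union_right

namespace Matroid

variable {α : Type*} {M : Matroid α} {C D Z : Set α}

theorem IsCircuit'.eq_of_subset (hD : M.IsCircuit' D) (hC : M.IsCircuit' C) (h : D ⊆ C) :
    D = C := by
  by_contra hne
  exact hD.1.not_indep (hC.2 D (h.ssubset_of_ne hne))

theorem IsCircuit'.exists_mem_diff_of_subset_symmDiff (hC : M.IsCircuit' C)
    (hD : M.IsCircuit' D) (hCZ : (C ∩ Z).Nonempty) (hDCZ : D ⊆ symmDiff C Z) :
    ∃ x ∈ D, x ∈ Z \ C := by
  by_contra! h
  have hDC : D ⊆ C \ Z := fun x hx =>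
    (mem_symmDiff.mp (hDCZ hx)).resolve_right fun hxZC => h x hx hxZC
  exact hD.1.not_indep (hC.2 D (hDC.trans_ssubset (sdiff_ssubset_left_iff.mpr hCZ)))

theorem isCircuit'_symmDiff_or_exists_disjoint_union
    (hbin : ∀ C1 C2 : Set α, M.IsCircuit' C1 → M.IsCircuit' C2 →
      M.IsCycle' (symmDiff C1 C2))
    (hC : M.IsCircuit' C) (hZ : M.IsCircuit' Z) (hCZ : (C ∩ Z).Nonempty) {a b : α}
    (hZC : Z \ C = {a, b}) :
    M.IsCircuit' (symmDiff C Z) ∨ ∃ A B : Set α, M.IsCircuit' A ∧ M.IsCircuit' B ∧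
      Disjoint A B ∧ symmDiff C Z = A ∪ B ∧ a ∈ A ∧ b ∈ B := by
  obtain ⟨𝒞, h𝒞, h𝒞disj, hunion⟩ := hbin C Z hC hZ
  have hmeet : ∀ D ∈ 𝒞, a ∈ D ∨ b ∈ D := by
    intro D hD
    obtain ⟨x, hxD, hx⟩ := hC.exists_mem_diff_of_subset_symmDiff (h𝒞 D hD) hCZ
      (hunion ▸ subset_sUnion_of_mem hD)
    rw [hZC] at hx
    rcases hx with rfl | rfl
    exacts [Or.inl hxD, Or.inr hxD]
  have hmem : ∀ x ∈ ({a, b} : Set α), ∃ D ∈ 𝒞, x ∈ D := fun x hx =>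
    mem_sUnion.mp (hunion ▸ Or.inr (hZC ▸ hx))
  obtain ⟨A, hA, haA⟩ := hmem a (mem_insert a _)
  obtain ⟨B, hB, hbB⟩ := hmem b (mem_insert_of_mem a rfl)
  rw [hunion, sUnion_eq_union_of_forall_mem_or_mem h𝒞disj hA hB haA hbB hmeet]
  by_cases hAB : A = B
  · subst hAB
    exact Or.inl (by simpa using h𝒞 A hA)
  · exact Or.inr ⟨A, B, h𝒞 A hA, h𝒞 B hB, h𝒞disj hA hB hAB, rfl, haA, hbB⟩

theorem isCircuit'_symmDiff_of_diff_eq_pair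
    (hbin : ∀ C1 C2 : Set α, M.IsCircuit' C1 → M.IsCircuit' C2 →
      M.IsCycle' (symmDiff C1 C2))
    (hC : M.IsCircuit' C) (hZ : M.IsCircuit' Z) (hD : M.IsCircuit' D) (hDCZ : D ⊆ C ∪ Z)
    (hDZ : (D ∩ Z).Nonempty) {b c : α} (hZD : Z \ D = {b, c}) (hc : c ∈ C)
    (hb : M.Indep {b}) :
    M.IsCircuit' (symmDiff D Z) := by
  refine (isCircuit'_symmDiff_or_exists_disjoint_union hbin hD hZ hDZ hZD).resolve_right ?_
  rintro ⟨B, B', hB, hB', hdisj, hunion, hbB, hcB'⟩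
  have hsub : symmDiff D Z ⊆ insert b C := by
    rintro x (⟨hxD, hxZ⟩ | hxZD)
    · exact Or.inr ((hDCZ hxD).resolve_right hxZ)
    · rw [hZD] at hxZD
      rcases hxZD with rfl | rfl
      exacts [mem_insert x C, Or.inr hc]
  have hB'C : B' = C := hB'.eq_of_subset hC fun x hx =>
    ((hsub (hunion ▸ Or.inr hx)).resolve_left
      fun hxb => disjoint_left.mp hdisj (hxb ▸ hbB) hx)
  have hBb : B ⊆ {b} := fun x hx =>
    (hsub (hunion ▸ Or.inl hx)).resolve_right fun hxC => disjoint_left.mp hdisj hx (hB'C ▸ hxC)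
  exact hB.1.not_indep (hb.subset hBb)

end Matroid

theorem circuit_triangle_general {α : Type*} (M : Matroid α)
    (hbin : ∀ C1 C2 : Set α, M.IsCircuit' C1 → M.IsCircuit' C2 →
      M.IsCycle' (symmDiff C1 C2))
    (e1 e2 e3 : α) (h13 : e1 ≠ e3) (h23 : e2 ≠ e3)
    (hZ : M.IsCircuit' {e1, e2, e3}) (C : Set α) (hC : M.IsCircuit' C)
    (hCZ : C ∩ {e1, e2, e3} = {e3})
    (hnot : ¬ M.IsCircuit' (symmDiff C {e1, e2, e3})) :
    ∃ C1 C2 : Set α, M.IsCircuit' C1 ∧ M.IsCircuit' C2 ∧ Disjoint C1 C2 ∧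
      symmDiff C {e1, e2, e3} = C1 ∪ C2 ∧ e1 ∈ C1 ∧ e2 ∈ C2 ∧
      M.IsCircuit' (symmDiff C1 {e1, e2, e3}) ∧
      M.IsCircuit' (symmDiff C2 {e1, e2, e3}) := by
  obtain ⟨he1C, he2C, he3C⟩ : e1 ∉ C ∧ e2 ∉ C ∧ e3 ∈ C := by
    simp only [Set.ext_iff, mem_inter_iff, mem_insert_iff, mem_singleton_iff] at hCZ
    grind
  have hZC : {e1, e2, e3} \ C = {e1, e2} := by
    ext x; simp only [mem_sdiff, mem_insert_iff, mem_singleton_iff]; grind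
  obtain ⟨C1, C2, hC1, hC2, hdisj, hunion, he1, he2⟩ :=
    (Matroid.isCircuit'_symmDiff_or_exists_disjoint_union hbin hC hZ ⟨e3, he3C, by simp⟩
      hZC).resolve_left hnot
  have hsub : C1 ∪ C2 ⊆ C ∪ {e1, e2, e3} := hunion ▸ symmDiff_subset_union
  have he3 : e3 ∉ C1 ∪ C2 := by rw [← hunion, mem_symmDiff]; simp [he3C]
  have he1C2 : e1 ∉ C2 := disjoint_left.mp hdisj he1
  have he2C1 : e2 ∉ C1 := disjoint_right.mp hdisj he2
  refine ⟨C1, C2, hC1, hC2, hdisj, hunion, he1, he2, ?_, ?_⟩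
  · refine Matroid.isCircuit'_symmDiff_of_diff_eq_pair hbin hC hZ hC1
      (subset_union_left.trans hsub) ⟨e1, he1, by simp⟩ (b := e2) (c := e3) ?_ he3C (hZ.2 {e2} ?_)
    · ext x; simp only [mem_sdiff, mem_insert_iff, mem_singleton_iff]; grind
    · rw [ssubset_iff_subset_ne]; grind
  · refine Matroid.isCircuit'_symmDiff_of_diff_eq_pair hbin hC hZ hC2
      (subset_union_right.trans hsub) ⟨e2, he2, by simp⟩ (b := e1) (c := e3) ?_ he3C (hZ.2 {e1} ?_)
    · ext x; simp only [mem_sdiff, mem_insert_iff, mem_singleton_iff]; grind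
    · rw [ssubset_iff_subset_ne]; grind

/-- Let `M` be a matroid in which the symmetric difference of any two circuits is a
disjoint union of circuits. Let `Z = {e1, e2, e3}` be a circuit of `M` (with `e1, e2, e3`
distinct) and `C` a circuit of `M` with `C ∩ Z = {e3}`. If `C ∆ Z` is not a circuit,
then `C ∆ Z` is a disjoint union of two circuits `C1` and `C2` containing `e1` and `e2`
respectively, and both `C1 ∆ Z` and `C2 ∆ Z` are circuits of `M`. -/
theorem circuit_triangle {α : Type*} (M : Matroid α)
    (hbin : ∀ C1 C2 : Set α, M.IsCircuit' C1 → M.IsCircuit' C2 →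
      M.IsCycle' (symmDiff C1 C2))
    (e1 e2 e3 : α) (h12 : e1 ≠ e2) (h13 : e1 ≠ e3) (h23 : e2 ≠ e3)
    (hZ : M.IsCircuit' {e1, e2, e3}) (C : Set α) (hC : M.IsCircuit' C)
    (hCZ : C ∩ {e1, e2, e3} = {e3})
    (hnot : ¬ M.IsCircuit' (symmDiff C {e1, e2, e3})) :
    ∃ C1 C2 : Set α, M.IsCircuit' C1 ∧ M.IsCircuit' C2 ∧ Disjoint C1 C2 ∧
      symmDiff C {e1, e2, e3} = C1 ∪ C2 ∧ e1 ∈ C1 ∧ e2 ∈ C2 ∧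
      M.IsCircuit' (symmDiff C1 {e1, e2, e3}) ∧
      M.IsCircuit' (symmDiff C2 {e1, e2, e3}) :=
  circuit_triangle_general M hbin e1 e2 e3 h13 h23 hZ C hC hCZ hnot
end

section
/- Let M be a matroid with the property that for every two circuits C1, C2 of M the symmetric difference C1 △ C2 is a disjoint union of circuits of M (this property characterizes binary matroids). Let Z = {e1, e2, e3} be a circuit of M with e1, e2, e3 distinct, and let C be a circuit of M such that C ∩ Z = {e1, e2}. Then C △ Z is a circuit of M. -/
/-!
By the binary property `C ∆ Z` is a disjoint union of circuits. Each of them contains `e3`: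
otherwise it would lie in `C \ {e1}`, a proper subset of the circuit `C`. Disjoint sets
sharing `e3` coincide, so the union consists of a single circuit.
-/

namespace Matroid

variable {α : Type*} {M : Matroid α}

theorem IsCircuit'.not_ssubset {C D : Set α} (hC : M.IsCircuit' C) (hD : M.IsCircuit' D) :
    ¬D ⊂ C :=
  fun hDC => hD.1.not_indep (hC.2 D hDC)

theorem IsCircuit'.mem_of_subset_insert_sdiff_singleton {C D : Set α} {e f : α}
    (hC : M.IsCircuit' C) (hD : M.IsCircuit' D) (hf : f ∈ C) (hDC : D ⊆ insert e (C \ {f})) :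
    e ∈ D := by
  by_contra he
  exact hC.not_ssubset hD
    (((Set.subset_insert_iff_of_notMem he).1 hDC).trans_ssubset (Set.sdiff_singleton_ssubset.2 hf))

theorem IsCycle'.isCircuit'_of_forall_mem {X : Set α} {e : α} (hX : M.IsCycle' X) (he : e ∈ X)
    (hmem : ∀ D, M.IsCircuit' D → D ⊆ X → e ∈ D) : M.IsCircuit' X := by
  obtain ⟨𝒞, hcirc, hdisj, rfl⟩ := hX
  obtain ⟨D, hD, heD⟩ := he
  suffices ⋃₀ 𝒞 = D from this ▸ hcirc D hD
  refine (Set.sUnion_subset fun D' hD' => ?_).antisymm (Set.subset_sUnion_of_mem hD)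
  have heD' := hmem D' (hcirc D' hD') (Set.subset_sUnion_of_mem hD')
  exact (hdisj.elim hD' hD (Set.not_disjoint_iff.2 ⟨e, heD', heD⟩)).le

end Matroid

theorem circuit_triangle_two_general {α : Type*} (M : Matroid α)
    (hbin : ∀ C1 C2 : Set α, M.IsCircuit' C1 → M.IsCircuit' C2 →
      M.IsCycle' (symmDiff C1 C2))
    (e1 e2 e3 : α) (h13 : e1 ≠ e3) (h23 : e2 ≠ e3)
    (hZ : M.IsCircuit' {e1, e2, e3}) (C : Set α) (hC : M.IsCircuit' C)
    (hCZ : C ∩ {e1, e2, e3} = {e1, e2}) :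
    M.IsCircuit' (symmDiff C {e1, e2, e3}) := by
  have he1 : e1 ∈ C := (by simp [hCZ] : e1 ∈ C ∩ {e1, e2, e3}).1
  have he2 : e2 ∈ C := (by simp [hCZ] : e2 ∈ C ∩ {e1, e2, e3}).1
  have he3 : e3 ∉ C := fun h => by
    have h3 : e3 ∈ C ∩ {e1, e2, e3} := ⟨h, by simp⟩
    simp [hCZ, h13.symm, h23.symm] at h3
  have hsub : symmDiff C {e1, e2, e3} ⊆ insert e3 (C \ {e1}) := by
    intro x hx
    simp only [Set.mem_symmDiff, Set.mem_insert_iff, Set.mem_singleton_iff, Set.mem_sdiff] at hx ⊢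
    grind
  exact (hbin C _ hC hZ).isCircuit'_of_forall_mem (e := e3) (by simp [Set.mem_symmDiff, he3])
    fun D hD hDX => hC.mem_of_subset_insert_sdiff_singleton hD he1 (hDX.trans hsub)

/-- Let `M` be a matroid in which the symmetric difference of any two circuits is a
disjoint union of circuits. Let `Z = {e1, e2, e3}` be a circuit of `M` (with `e1, e2, e3`
distinct) and `C` a circuit of `M` with `C ∩ Z = {e1, e2}`. Then `C ∆ Z` is a circuit
of `M`. -/
theorem circuit_triangle_two {α : Type*} (M : Matroid α)
    (hbin : ∀ C1 C2 : Set α, M.IsCircuit' C1 → M.IsCircuit' C2 →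
      M.IsCycle' (symmDiff C1 C2))
    (e1 e2 e3 : α) (h12 : e1 ≠ e2) (h13 : e1 ≠ e3) (h23 : e2 ≠ e3)
    (hZ : M.IsCircuit' {e1, e2, e3}) (C : Set α) (hC : M.IsCircuit' C)
    (hCZ : C ∩ {e1, e2, e3} = {e1, e2}) :
    M.IsCircuit' (symmDiff C {e1, e2, e3}) :=
  circuit_triangle_two_general M hbin e1 e2 e3 h13 h23 hZ C hC hCZ
end

section
/- Let G be a simple graph containing a triangle on vertices v, a, b; let e1 = va, e2 = vb, e3 = ab and Z = {e1, e2, e3}. Let C be the edge set of a cycle of G (a closed walk of length at least 3 with pairwise distinct internal vertices) such that C ∩ Z = {e3}. Then C △ Z is the edge set of a cycle of G if and only if v is not a vertex of the cycle with edge set C, i.e., v is not an endpoint of any edge of C. -/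
/-!
A cycle meets each vertex in at most two edges, so if `v` lay on `C`, the cycle `C ∆ Z` would
contain `va`, `vb` and an edge of `C` at `v`. Conversely, if `v` avoids `C`, deleting `ab` from
`C` leaves a path from `b` to `a` that avoids `v`, and closing it up through `v` gives a cycle
with edge set `C ∆ Z`.
-/

open SimpleGraph

def IsCycleEdgeSet {V : Type*} (G : SimpleGraph V) (C : Set (Sym2 V)) : Prop :=
  ∃ (u : V) (w : G.Walk u u), w.IsCycle ∧ C = {e | e ∈ w.edges}

namespace SimpleGraph.Walk

variable {V : Type*} {G : SimpleGraph V}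

theorem IsPath.fst_ne_of_mem_darts {u v : V} {p : G.Walk u v} (hp : p.IsPath) {d : G.Dart}
    (hd : d ∈ p.darts) : d.fst ≠ v := by
  have hnodup := hp.support_nodup
  rw [← p.map_fst_darts_append, List.nodup_append] at hnodup
  exact hnodup.2.2 _ (List.mem_map_of_mem hd) _ (List.mem_singleton_self v)

theorem IsCycle.exists_isCycle_cons_of_mem_darts {u a b : V} {c : G.Walk u u} (hc : c.IsCycle)
    (h : G.Adj a b) (hd : ⟨(a, b), h⟩ ∈ c.darts) :
    ∃ q : G.Walk b a, (cons h q).IsCycle ∧ (cons h q).edges.Perm c.edges := by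
  classical
  have ha : a ∈ c.support := c.dart_fst_mem_support_of_mem_darts hd
  have hrot := hc.rotate ha
  have hd' := ((c.rotate_darts a ha).mem_iff).mpr hd
  have hedges := (c.rotate_edges a ha).perm
  generalize c.rotate a ha = c' at hrot hd' hedges
  obtain ⟨x, h', q, rfl⟩ := not_nil_iff.mp hrot.not_nil
  rw [darts_cons, List.mem_cons] at hd'
  rcases hd' with hd' | hd'
  · cases hd'
    exact ⟨q, hrot, hedges⟩
  · exact absurd rfl (((cons_isCycle_iff q h').mp hrot).1.fst_ne_of_mem_darts hd')

theorem IsCycle.exists_isCycle_cons_of_mem_edges {u a b : V} {c : G.Walk u u} (hc : c.IsCycle)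
    (h : G.Adj a b) (he : s(a, b) ∈ c.edges) :
    ∃ q : G.Walk b a, (cons h q).IsCycle ∧ (cons h q).edges.Perm c.edges := by
  obtain ⟨⟨⟨x, y⟩, hxy⟩, hd, hde⟩ := List.mem_map.mp he
  rw [Dart.edge_mk, Sym2.eq_iff] at hde
  rcases hde with ⟨rfl, rfl⟩ | ⟨rfl, rfl⟩
  · exact hc.exists_isCycle_cons_of_mem_darts h hd
  · obtain ⟨q, hqc, hqe⟩ := hc.reverse.exists_isCycle_cons_of_mem_darts h
      (mem_darts_reverse.mpr hd)
    exact ⟨q, hqc, hqe.trans (by rw [edges_reverse]; exact List.reverse_perm _)⟩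

theorem IsCycle.eq_or_eq_or_eq_of_mem_edges {u v x y z : V} {c : G.Walk u u} (hc : c.IsCycle)
    (hx : s(v, x) ∈ c.edges) (hy : s(v, y) ∈ c.edges) (hz : s(v, z) ∈ c.edges) :
    x = y ∨ x = z ∨ y = z := by
  by_contra! hne
  have htwo := hc.ncard_neighborSet_toSubgraph_eq_two (c.fst_mem_support_of_mem_edges hx)
  have hsub : {x, y, z} ⊆ c.toSubgraph.neighborSet v := by
    simp only [Set.insert_subset_iff, Set.singleton_subset_iff, Subgraph.mem_neighborSet,
      adj_toSubgraph_iff_mem_edges]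
    exact ⟨hx, hy, hz⟩
  have hle := Set.ncard_le_ncard hsub (Set.finite_of_ncard_pos (by omega))
  rw [Set.ncard_eq_three.mpr ⟨x, y, z, hne.1, hne.2.1, hne.2.2, rfl⟩, htwo] at hle
  omega

theorem IsPath.isCycle_cons_concat {a b v : V} {q : G.Walk b a} (hq : q.IsPath)
    (hv : v ∉ q.support) (hvb : G.Adj v b) (hav : G.Adj a v) (hab : a ≠ b) :
    (cons hvb (q.concat hav)).IsCycle := by
  refine (cons_isCycle_iff _ _).mpr ⟨hq.concat hv hav, ?_⟩
  rw [edges_concat, List.concat_eq_append, List.mem_append, List.mem_singleton, Sym2.eq_iff]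
  rintro (h | ⟨rfl, rfl⟩ | ⟨-, rfl⟩)
  · exact hv (q.fst_mem_support_of_mem_edges h)
  · exact hvb.ne rfl
  · exact hab rfl

end SimpleGraph.Walk

theorem Set.symmDiff_insert_insert_singleton_of_mem {α : Type*} {s : Set α} {x y z : α}
    (hz : z ∈ s) (hx : x ∉ s) (hy : y ∉ s) :
    symmDiff s {x, y, z} = insert x (insert y (s \ {z})) := by
  ext e
  simp only [symmDiff_def, Set.sup_eq_union, Set.mem_union, Set.mem_sdiff, Set.mem_insert_iff,
    Set.mem_singleton_iff]
  grind

namespace IsCycleEdgeSet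

variable {V : Type*} {G : SimpleGraph V} {C : Set (Sym2 V)}

theorem eq_or_eq_or_eq_of_mem (hC : IsCycleEdgeSet G C) {v x y z : V} (hx : s(v, x) ∈ C)
    (hy : s(v, y) ∈ C) (hz : s(v, z) ∈ C) : x = y ∨ x = z ∨ y = z := by
  obtain ⟨u, c, hc, rfl⟩ := hC
  exact hc.eq_or_eq_or_eq_of_mem_edges hx hy hz

theorem insert_insert_diff_singleton (hC : IsCycleEdgeSet G C) {v a b : V} (hva : G.Adj v a)
    (hvb : G.Adj v b) (hab : G.Adj a b) (hab_C : s(a, b) ∈ C) (hv : ∀ e ∈ C, v ∉ e) :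
    IsCycleEdgeSet G (insert s(v, a) (insert s(v, b) (C \ {s(a, b)}))) := by
  obtain ⟨u, c, hc, rfl⟩ := hC
  obtain ⟨q, hqc, hperm⟩ := hc.exists_isCycle_cons_of_mem_edges hab hab_C
  obtain ⟨hq, hab_q⟩ := (Walk.cons_isCycle_iff q hab).mp hqc
  have hc_q : ∀ e, e ∈ c.edges ↔ e = s(a, b) ∨ e ∈ q.edges := by
    simp [← hperm.mem_iff]
  have hv_q : v ∉ q.support := by
    rw [Walk.mem_support_iff_exists_mem_edges]
    rintro (rfl | ⟨e, he, hve⟩)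
    · exact hva.ne rfl
    · exact hv e ((hc_q e).mpr (Or.inr he)) hve
  refine ⟨v, _, hq.isCycle_cons_concat hv_q hvb hva.symm hab.ne, ?_⟩
  ext e
  simp only [Set.mem_insert_iff, Set.mem_sdiff, Set.mem_singleton_iff, Set.mem_ofPred_eq,
    Walk.edges_cons, Walk.edges_concat, List.concat_eq_append, List.mem_cons, List.mem_append,
    hc_q, Sym2.eq_swap (a := a)]
  grind

end IsCycleEdgeSet

/-- Let `G` contain a triangle on vertices `v, a, b`, with edges
`e1 = s(v,a)`, `e2 = s(v,b)`, `e3 = s(a,b)`, and let `Z = {e1, e2, e3}`.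
If `C` is the edge set of a cycle of `G` with `C ∩ Z = {e3}`, then `C ∆ Z` is the
edge set of a cycle of `G` if and only if `v` is not an endpoint of any edge of `C`. -/
theorem cycle_symmDiff_triangle_iff {V : Type*} (G : SimpleGraph V) (v a b : V)
    (hva : G.Adj v a) (hvb : G.Adj v b) (hab : G.Adj a b)
    (C : Set (Sym2 V)) (hC : IsCycleEdgeSet G C)
    (hCZ : C ∩ {s(v, a), s(v, b), s(a, b)} = {s(a, b)}) :
    IsCycleEdgeSet G (symmDiff C {s(v, a), s(v, b), s(a, b)}) ↔
      ∀ e ∈ C, v ∉ e := by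
  have hv_ab : v ∉ s(a, b) := by simp [hva.ne, hvb.ne]
  have hCZ' : ∀ e ∈ C, e ∈ ({s(v, a), s(v, b), s(a, b)} : Set _) → e = s(a, b) :=
    fun e he hZ => (Set.ext_iff.mp hCZ e).mp ⟨he, hZ⟩
  have hab_C : s(a, b) ∈ C := (hCZ.ge rfl).1
  have hva_C : s(v, a) ∉ C := fun h => hv_ab (hCZ' _ h (by simp) ▸ Sym2.mem_mk_left v a)
  have hvb_C : s(v, b) ∉ C := fun h => hv_ab (hCZ' _ h (by simp) ▸ Sym2.mem_mk_left v b)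
  rw [Set.symmDiff_insert_insert_singleton_of_mem hab_C hva_C hvb_C]
  constructor
  · rintro hC' e he hve
    obtain ⟨x, rfl⟩ := Sym2.mem_iff_exists.mp hve
    have hvx : s(v, x) ∈ C \ {s(a, b)} := ⟨he, fun h => hv_ab (h ▸ hve)⟩
    rcases hC'.eq_or_eq_or_eq_of_mem (.inr (.inr hvx)) (.inl rfl) (.inr (.inl rfl))
      with rfl | rfl | h
    · exact hva_C he
    · exact hvb_C he
    · exact hab.ne h
  · exact hC.insert_insert_diff_singleton hva hvb hab hab_C
end

section
/- Let G be a finite simple graph with an edge weight function w mapping each edge to a natural number, let T be a set of edges of G, and let k be a positive integer. Let (A1, B1) and (A2, B2) be partitions of V(G) such that for each i ∈ {1,2}, T ⊆ E(Ai, Bi) and the total weight of the edges in E(Ai, Bi) \ T is at most k. Then the total weight of the edges in E(A1 △ A2, A1 △ B2) is at most 2k. -/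
/-- The set `E(A,B)` of edges of `G` with one endpoint in `A` and the other in `B`. -/
def finCut {V : Type*} [Fintype V] [DecidableEq V] (G : SimpleGraph V)
    [DecidableRel G.Adj] (A B : Finset V) : Finset (Sym2 V) :=
  G.edgeFinset.filter (fun e => ∃ x ∈ A, ∃ y ∈ B, e = s(x, y))

/-!
With `Bᵢ = Aᵢᶜ`, the new cut is `(C, Cᶜ)` for `C = A1 ∆ A2`. An edge crosses `C` iff it crosses
exactly one of `A1`, `A2`, so the new cut-set is the symmetric difference of the two old ones.
Terminal edges lie in both old cut-sets, hence in neither half of that symmetric difference,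
which therefore weighs at most `k + k`.
-/

open Finset
open scoped symmDiff

theorem Finset.sum_symmDiff_le_sum_sdiff_add_sum_sdiff {α M : Type*} [DecidableEq α]
    [AddCommMonoid M] [PartialOrder M] [IsOrderedAddMonoid M] [CanonicallyOrderedAdd M]
    (f : α → M) {s t u : Finset α} (hs : u ⊆ s) (ht : u ⊆ t) :
    ∑ x ∈ s ∆ t, f x ≤ ∑ x ∈ s \ u, f x + ∑ x ∈ t \ u, f x := by
  rw [symmDiff_def, sup_eq_union, sum_union disjoint_sdiff_sdiff]
  gcongr

theorem Finset.symmDiff_compl {α : Type*} [Fintype α] [DecidableEq α] (s t : Finset α) :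
    s ∆ tᶜ = (s ∆ t)ᶜ := by
  ext
  simp only [mem_symmDiff, mem_compl]
  tauto

section
variable {V : Type*} [Fintype V] [DecidableEq V] (G : SimpleGraph V) [DecidableRel G.Adj]

theorem mk_mem_finCut_compl_iff {A : Finset V} {x y : V} :
    s(x, y) ∈ finCut G A Aᶜ ↔ G.Adj x y ∧ ¬(x ∈ A ↔ y ∈ A) := by
  simp only [finCut, mem_filter, SimpleGraph.mem_edgeFinset, SimpleGraph.mem_edgeSet,
    mem_compl, Sym2.eq_iff]
  grind

theorem finCut_symmDiff_compl (A B : Finset V) :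
    finCut G (A ∆ B) (A ∆ B)ᶜ = finCut G A Aᶜ ∆ finCut G B Bᶜ := by
  ext e
  induction e using Sym2.ind with
  | _ x y =>
    simp only [mem_symmDiff, mk_mem_finCut_compl_iff]
    tauto

end

theorem two_cuts_weight_general {V : Type*} [Fintype V] [DecidableEq V]
    (G : SimpleGraph V) [DecidableRel G.Adj] (w : Sym2 V → ℕ)
    (T : Finset (Sym2 V)) (k : ℕ)
    (A1 B1 A2 B2 : Finset V)
    (hpart1 : A1 ∪ B1 = Finset.univ) (hdisj1 : Disjoint A1 B1)
    (hpart2 : A2 ∪ B2 = Finset.univ) (hdisj2 : Disjoint A2 B2)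
    (hT1 : T ⊆ finCut G A1 B1) (hT2 : T ⊆ finCut G A2 B2)
    (hw1 : ∑ e ∈ finCut G A1 B1 \ T, w e ≤ k)
    (hw2 : ∑ e ∈ finCut G A2 B2 \ T, w e ≤ k) :
    ∑ e ∈ finCut G (symmDiff A1 A2) (symmDiff A1 B2), w e ≤ 2 * k := by
  have hB1 : B1 = A1ᶜ := (IsCompl.of_eq hdisj1.eq_bot hpart1).compl_eq.symm
  have hB2 : B2 = A2ᶜ := (IsCompl.of_eq hdisj2.eq_bot hpart2).compl_eq.symm
  subst hB1 hB2
  rw [Finset.symmDiff_compl, finCut_symmDiff_compl, two_mul]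
  exact (sum_symmDiff_le_sum_sdiff_add_sum_sdiff w hT1 hT2).trans (add_le_add hw1 hw2)

/-- Lemma on two cuts: if `(A1, B1)` and `(A2, B2)` are cuts of `G` such that each
cut-set `E(Ai, Bi)` contains the terminal edges `T` and has nonterminal weight at most
`k`, then the cut `(A1 ∆ A2, A1 ∆ B2)` has weight at most `2k`. -/
theorem two_cuts_weight {V : Type*} [Fintype V] [DecidableEq V]
    (G : SimpleGraph V) [DecidableRel G.Adj] (w : Sym2 V → ℕ)
    (T : Finset (Sym2 V)) (hT : T ⊆ G.edgeFinset) (k : ℕ) (hk : 0 < k)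
    (A1 B1 A2 B2 : Finset V)
    (hpart1 : A1 ∪ B1 = Finset.univ) (hdisj1 : Disjoint A1 B1)
    (hpart2 : A2 ∪ B2 = Finset.univ) (hdisj2 : Disjoint A2 B2)
    (hT1 : T ⊆ finCut G A1 B1) (hT2 : T ⊆ finCut G A2 B2)
    (hw1 : ∑ e ∈ finCut G A1 B1 \ T, w e ≤ k)
    (hw2 : ∑ e ∈ finCut G A2 B2 \ T, w e ≤ k) :
    ∑ e ∈ finCut G (symmDiff A1 A2) (symmDiff A1 B2), w e ≤ 2 * k :=
  two_cuts_weight_general G w T k A1 B1 A2 B2 hpart1 hdisj1 hpart2 hdisj2 hT1 hT2 hw1 hw2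
end

section
/- Let p and q be positive integers and let G be a finite connected simple graph. If there exists a partition (A, B) of V(G) with |A| > pq, |B| > pq and |E(A,B)| ≤ p, then G has a (q, p)-good edge separation, i.e., a partition (A', B') of V(G) such that |A'| > q, |B'| > q, |E(A',B')| ≤ p, and both induced subgraphs G[A'] and G[B'] are connected. -/
/-!
Since `G` is connected, every component of `G[S]` (for `S ≠ V`) sends an edge out of `S`, and
distinct components send distinct edges. So `G[A]` has at most `p` components and one of them, `C`,
has more than `q` vertices; all edges leaving `C` cross `(A, B)`. Now `Cᶜ ⊇ B` is large and
`|E(C, Cᶜ)| ≤ p`, so the same count gives a component `D` of `G[Cᶜ]` with more than `q` vertices,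
all of whose outside edges go into `C`. Then `(D, Dᶜ)` is the separation: `G[Dᶜ]` is connected since
`G[C]` is and every other component of `G[Cᶜ]` is attached to `C`.
-/

open Finset

namespace SimpleGraph

variable {V : Type*} {G : SimpleGraph V} {S C D : Set V} {u v x : V}

def ReachableIn (G : SimpleGraph V) (S : Set V) (u v : V) : Prop :=
  ∃ w : G.Walk u v, ∀ y ∈ w.support, y ∈ S

/-- For `C ⊆ S` this says that `C` is a union of connected components of `G[S]`. -/
def AdjClosedIn (G : SimpleGraph V) (S C : Set V) : Prop :=
  ∀ ⦃x y⦄, x ∈ C → y ∈ S → G.Adj x y → y ∈ C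

namespace ReachableIn

lemma mem_right (h : G.ReachableIn S u v) : v ∈ S :=
  h.elim fun w hw => hw v w.end_mem_support

lemma refl (hu : u ∈ S) : G.ReachableIn S u u :=
  ⟨.nil, by simpa using hu⟩

lemma symm (h : G.ReachableIn S u v) : G.ReachableIn S v u :=
  h.elim fun w hw => ⟨w.reverse, fun y hy => hw y (by simpa using hy)⟩

lemma trans (h : G.ReachableIn S u v) (h' : G.ReachableIn S v x) : G.ReachableIn S u x := by
  obtain ⟨w, hw⟩ := h
  obtain ⟨w', hw'⟩ := h'
  refine ⟨w.append w', fun y hy => ?_⟩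
  rcases w.mem_support_append_iff w' |>.mp hy with hy | hy
  exacts [hw y hy, hw' y hy]

lemma of_adj (hu : u ∈ S) (hv : v ∈ S) (huv : G.Adj u v) : G.ReachableIn S u v :=
  ⟨huv.toWalk, by simp [hu, hv]⟩

lemma of_mem_support {w : G.Walk u v} (hw : ∀ y ∈ w.support, y ∈ S) (hx : x ∈ w.support) :
    G.ReachableIn S u x := by
  classical
  exact ⟨w.takeUntil x hx, fun y hy => hw y (w.support_takeUntil_subset_support hx hy)⟩

lemma mem_of_adjClosedIn (hC : G.AdjClosedIn S C) (h : G.ReachableIn S u v) (hu : u ∈ C) :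
    v ∈ C := by
  obtain ⟨w, hw⟩ := h
  induction w with
  | nil => exact hu
  | cons huy w ih =>
    simp only [Walk.support_cons, List.mem_cons, forall_eq_or_imp] at hw
    exact ih (hC hu (hw.2 _ w.start_mem_support) huy) hw.2

end ReachableIn

lemma Walk.exists_reachableIn_adj_notMem (w : G.Walk u v) (hu : u ∈ S) (hv : v ∉ S) :
    ∃ a b, G.ReachableIn S u a ∧ G.Adj a b ∧ b ∉ S := by
  induction w with
  | nil => exact absurd hu hv
  | @cons u y v huy w ih =>
    by_cases hy : y ∈ S
    · obtain ⟨a, b, hya, hab, hb⟩ := ih hy hv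
      exact ⟨a, b, (ReachableIn.of_adj hu hy huy).trans hya, hab, hb⟩
    · exact ⟨u, y, .refl hu, huy, hy⟩

lemma adjClosedIn_setOf_reachableIn : G.AdjClosedIn S {v | G.ReachableIn S u v} :=
  fun _ _ hx hy hxy => hx.trans (.of_adj hx.mem_right hy hxy)

lemma connected_induce_setOf_reachableIn (hu : u ∈ S) :
    (G.induce {v | G.ReachableIn S u v}).Connected := by
  refine induce_connected_of_patches u (.refl hu) fun {v} ⟨w, hw⟩ => ?_
  refine ⟨{x | x ∈ w.support}, fun x hx => .of_mem_support hw hx, w.start_mem_support,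
    w.end_mem_support, w.connected_induce_support.preconnected _ _⟩

lemma reachableIn_of_exit_eq {u u' a a' b b' : V} (hua : G.ReachableIn S u a)
    (hua' : G.ReachableIn S u' a') (hb : b ∉ S) (he : s(a, b) = s(a', b')) :
    G.ReachableIn S u u' := by
  obtain ⟨rfl, -⟩ | ⟨-, rfl⟩ := Sym2.eq_iff.mp he
  · exact hua.trans hua'.symm
  · exact absurd hua'.mem_right hb

/-- A vertex of `Dᶜ \ C` reaches `C` within `Cᶜ`, and such a walk avoids `D` because `D` is
closed in `Cᶜ`. -/
lemma connected_induce_compl_of_adjClosedIn (hG : G.Connected) (hC : (G.induce C).Connected)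
    (hCD : Disjoint C D) (hD : G.AdjClosedIn Cᶜ D) : (G.induce Dᶜ).Connected := by
  obtain ⟨⟨u, hu⟩⟩ := hC.nonempty
  refine induce_connected_of_patches u (hCD.notMem_of_mem_left hu) fun {v} hv => ?_
  by_cases hvC : v ∈ C
  · exact ⟨C, hCD.subset_compl_right, hu, hvC, hC.preconnected _ _⟩
  obtain ⟨a, b, hva, hab, hb⟩ := (hG.preconnected v u).some.exists_reachableIn_adj_notMem
    (S := Cᶜ) hvC (not_not.mpr hu)
  have hR : {x | G.ReachableIn Cᶜ v x} ⊆ Dᶜ := fun _ hx hxD =>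
    hv (hx.symm.mem_of_adjClosedIn hD hxD)
  refine ⟨{x | G.ReachableIn Cᶜ v x} ∪ C, Set.union_subset hR hCD.subset_compl_right,
    Or.inr hu, Or.inl (.refl hvC), ?_⟩
  exact (connected_induce_union (connected_induce_setOf_reachableIn hvC).preconnected
    hC.preconnected hva (not_not.mp hb) hab).preconnected _ _

end SimpleGraph

open SimpleGraph

section finCut

variable {V : Type*} [Fintype V] [DecidableEq V] {G : SimpleGraph V} [DecidableRel G.Adj]
  {A B C D S : Finset V}

lemma mem_finCut_of_adj {x y : V} (hxy : G.Adj x y) (hx : x ∈ A) (hy : y ∈ B) :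
    s(x, y) ∈ finCut G A B :=
  mem_filter.mpr ⟨G.mem_edgeFinset.mpr hxy, x, hx, y, hy, rfl⟩

lemma finCut_comm (G : SimpleGraph V) [DecidableRel G.Adj] (A B : Finset V) :
    finCut G A B = finCut G B A := by
  ext e
  simp only [finCut, mem_filter]
  refine and_congr_right fun _ => ⟨?_, ?_⟩
  all_goals
    rintro ⟨x, hx, y, hy, rfl⟩
    exact ⟨y, hy, x, hx, Sym2.eq_swap⟩

lemma finCut_subset_finCut (h : ∀ x ∈ A, ∀ y ∈ B, G.Adj x y → x ∈ C ∧ y ∈ D) :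
    finCut G A B ⊆ finCut G C D := by
  intro e he
  obtain ⟨hedge, x, hx, y, hy, rfl⟩ := mem_filter.mp he
  have hxy := G.mem_edgeFinset.mp hedge
  exact mem_finCut_of_adj hxy (h x hx y hy hxy).1 (h x hx y hy hxy).2

lemma finCut_compl_subset_of_adjClosedIn (hCS : C ⊆ S) (hC : G.AdjClosedIn S C) :
    finCut G C Cᶜ ⊆ finCut G S Sᶜ :=
  finCut_subset_finCut fun _ hx _ hy hxy =>
    ⟨hCS hx, mem_compl.mpr fun hyS => mem_compl.mp hy (hC hx hyS hxy)⟩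

lemma exists_large_component {q : ℕ} (hG : G.Connected) {z : V} (hz : z ∉ S)
    (hcard : (finCut G S Sᶜ).card * q < S.card) :
    ∃ C ⊆ S, q < C.card ∧ (G.induce (C : Set V)).Connected ∧ G.AdjClosedIn S C := by
  classical
  have hexit (u) (hu : u ∈ S) : ∃ a b, G.ReachableIn S u a ∧ G.Adj a b ∧ b ∉ S :=
    (hG.preconnected u z).some.exists_reachableIn_adj_notMem hu hz
  choose! a b hua hab hb using hexit
  have hmaps (u) (hu : u ∈ S) : s(a u, b u) ∈ finCut G S Sᶜ :=
    mem_finCut_of_adj (hab u hu) (hua u hu).mem_right (mem_compl.mpr (hb u hu))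
  obtain ⟨e, -, hfiber⟩ := exists_lt_card_fiber_of_mul_lt_card_of_maps_to hmaps hcard
  obtain ⟨u, hu⟩ := card_pos.mp (q.zero_le.trans_lt hfiber)
  obtain ⟨huS, hue⟩ := mem_filter.mp hu
  have hC : ((S.filter (G.ReachableIn S u) : Finset V) : Set V) = {v | G.ReachableIn S u v} := by
    ext v
    simpa using fun h => h.mem_right
  refine ⟨S.filter (G.ReachableIn S u), filter_subset _ _, hfiber.trans_le (card_le_card ?_),
    hC ▸ connected_induce_setOf_reachableIn huS, hC ▸ adjClosedIn_setOf_reachableIn⟩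
  intro u' hu'
  obtain ⟨hu'S, hu'e⟩ := mem_filter.mp hu'
  exact mem_filter.mpr ⟨hu'S, reachableIn_of_exit_eq (hua u huS) (hua u' hu'S) (hb u huS)
    (hue.trans hu'e.symm)⟩

end finCut

theorem good_edge_separation_of_breakable_general {V : Type*} [Fintype V] [DecidableEq V]
    (G : SimpleGraph V) [DecidableRel G.Adj] (p q : ℕ)
    (hconn : G.Connected) (A B : Finset V)
    (hpart : A ∪ B = Finset.univ) (hdisj : Disjoint A B)
    (hA : p * q < A.card) (hB : p * q < B.card) (hcut : (finCut G A B).card ≤ p) :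
    ∃ A' B' : Finset V, A' ∪ B' = Finset.univ ∧ Disjoint A' B' ∧
      q < A'.card ∧ q < B'.card ∧ (finCut G A' B').card ≤ p ∧
      (G.induce (A' : Set V)).Connected ∧ (G.induce (B' : Set V)).Connected := by
  obtain rfl : B = Aᶜ := (IsCompl.compl_eq ⟨hdisj, codisjoint_iff.mpr hpart⟩).symm
  obtain ⟨z, hz⟩ := card_pos.mp (Nat.zero_lt_of_lt hB)
  obtain ⟨C, hCA, hqC, hCconn, hCcl⟩ :=
    exists_large_component hconn (mem_compl.mp hz) ((Nat.mul_le_mul_right q hcut).trans_lt hA)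
  have hcutC : (finCut G C Cᶜ).card ≤ p :=
    (card_le_card (finCut_compl_subset_of_adjClosedIn hCA hCcl)).trans hcut
  obtain ⟨u, hu⟩ := card_pos.mp (Nat.zero_lt_of_lt hqC)
  have hcutCc : (finCut G Cᶜ Cᶜᶜ).card ≤ p := by rwa [compl_compl, finCut_comm]
  have hBC : Aᶜ.card ≤ Cᶜ.card := card_le_card (compl_subset_compl.mpr hCA)
  obtain ⟨D, hDC, hqD, hDconn, hDcl⟩ := exists_large_component hconn
    (show u ∉ Cᶜ by simpa using hu) ((Nat.mul_le_mul_right q hcutCc).trans_lt (hB.trans_le hBC))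
  have hCD : Disjoint C D := (subset_compl_iff_disjoint_right.mp hDC).symm
  refine ⟨D, Dᶜ, union_compl D, disjoint_compl_right, hqD,
    hqC.trans_le (card_le_card (subset_compl_iff_disjoint_right.mpr hCD)),
    (card_le_card (finCut_compl_subset_of_adjClosedIn hDC hDcl)).trans hcutCc, hDconn, ?_⟩
  rw [coe_compl] at hDcl ⊢
  exact connected_induce_compl_of_adjClosedIn hconn hCconn (disjoint_coe.mpr hCD) hDcl

/-- If a finite connected graph `G` has a partition `(A, B)` of its vertices with
`|A| > pq`, `|B| > pq` and `|E(A,B)| ≤ p`, then `G` has a `(q,p)`-good edge separation: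
a partition `(A', B')` with `|A'| > q`, `|B'| > q`, `|E(A',B')| ≤ p`, and both induced
subgraphs `G[A']` and `G[B']` connected. -/
theorem good_edge_separation_of_breakable {V : Type*} [Fintype V] [DecidableEq V]
    (G : SimpleGraph V) [DecidableRel G.Adj] (p q : ℕ) (hp : 0 < p) (hq : 0 < q)
    (hconn : G.Connected) (A B : Finset V)
    (hpart : A ∪ B = Finset.univ) (hdisj : Disjoint A B)
    (hA : p * q < A.card) (hB : p * q < B.card) (hcut : (finCut G A B).card ≤ p) :
    ∃ A' B' : Finset V, A' ∪ B' = Finset.univ ∧ Disjoint A' B' ∧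
      q < A'.card ∧ q < B'.card ∧ (finCut G A' B').card ≤ p ∧
      (G.induce (A' : Set V)).Connected ∧ (G.induce (B' : Set V)).Connected :=
  good_edge_separation_of_breakable_general G p q hconn A B hpart hdisj hA hB hcut
end
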